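/- For all non-negative integers n and p, Σ_{k=1}^{n+1} k^p = (1/n!) · Σ_{j=0}^{n} (j!)^2 · {p+1, j+1} · ( Σ_{k=j}^{n} [n+1, k+1] · {k+1, j+1} ), where [n+1, k+1] is the unsigned Stirling number of the first kind and {m, r} denotes Stirling numbers of the second kind. The identity is an equality of rational numbers. -/

import Mathlib

/-- Unsigned Stirling numbers of the first kind. -/
def stirlingFirst : ℕ → ℕ → ℕ
  | 0, 0 => 1
  | 0, _ + 1 => 0
  | _ + 1, 0 => 0
  | n + 1, k + 1 => n * stirlingFirst n (k + 1) + stirlingFirst n k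

/-- Stirling numbers of the second kind. -/
def stirlingSecond : ℕ → ℕ → ℕ
  | 0, 0 => 1
  | 0, _ + 1 => 0
  | _ + 1, 0 => 0
  | n + 1, k + 1 => (k + 1) * stirlingSecond n (k + 1) + stirlingSecond n k

/-!
Expanding `(m + 1) ^ p = ∑ j, {p+1, j+1} m^(j)` in falling factorials and summing over `m` with
the hockey-stick identity gives `∑_{k ≤ n+1} k ^ p = ∑ j, {p+1, j+1} j! C(n+1, j+1)`.
The inner sum on the right-hand side is the Lah number `L(n+1, j+1) = ∑ k, [n+1, k] {k, j+1}`.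
The Stirling recurrences give `L(n+1, k+1) = (n+k+1) L(n, k+1) + L(n, k)`, from which
`j! L(n+1, j+1) = n! C(n+1, j+1)` follows by induction, and the two sides agree termwise.
-/

open Finset
open scoped Nat

theorem stirlingFirst_eq_nat_stirlingFirst : stirlingFirst = Nat.stirlingFirst := by
  funext n k
  induction n generalizing k with
  | zero => cases k <;> rfl
  | succ n ih => cases k <;> simp [stirlingFirst, Nat.stirlingFirst_succ_succ, ih]

theorem stirlingSecond_eq_nat_stirlingSecond : stirlingSecond = Nat.stirlingSecond := by
  funext n k
  induction n generalizing k with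
  | zero => cases k <;> rfl
  | succ n ih => cases k <;> simp [stirlingSecond, Nat.stirlingSecond_succ_succ, ih]

theorem Finset.sum_range_eq_sum_range_of_eq_zero {M : Type*} [AddCommMonoid M] {f : ℕ → M}
    {a b : ℕ} (ha : ∀ i, a ≤ i → f i = 0) (hb : ∀ i, b ≤ i → f i = 0) :
    ∑ i ∈ range a, f i = ∑ i ∈ range b, f i := by
  wlog hab : a ≤ b generalizing a b
  · exact (this hb ha (by omega)).symm
  exact sum_subset (range_subset_range.2 hab) fun i _ hi => ha i (by simpa using hi)

namespace Nat

theorem mul_descFactorial (m i : ℕ) :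
    m * m.descFactorial i = m.descFactorial (i + 1) + i * m.descFactorial i := by
  rcases le_or_gt i m with him | hmi
  · rw [descFactorial_succ, ← Nat.add_mul, Nat.sub_add_cancel him]
  · simp [descFactorial_eq_zero_iff_lt.2 hmi]

theorem pow_eq_sum_stirlingSecond_mul_descFactorial (m q : ℕ) :
    m ^ q = ∑ i ∈ range (q + 1), stirlingSecond q i * m.descFactorial i := by
  induction q with
  | zero => simp
  | succ q ih =>
    have shift : ∑ i ∈ range (q + 1), stirlingSecond q i * (i * m.descFactorial i) =
        ∑ i ∈ range (q + 1), (i + 1) * stirlingSecond q (i + 1) * m.descFactorial (i + 1) :=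
      calc _ = ∑ i ∈ range (q + 2), stirlingSecond q i * (i * m.descFactorial i) := by
            simp [sum_range_succ _ (q + 1), stirlingSecond_eq_zero_of_lt (lt_add_one q)]
        _ = _ := by
            rw [sum_range_succ']
            exact (add_zero _).trans (sum_congr rfl fun i _ => by ring)
    calc m ^ (q + 1) = ∑ i ∈ range (q + 1), stirlingSecond q i * (m * m.descFactorial i) := by
          rw [pow_succ', ih, mul_sum]; exact sum_congr rfl fun i _ => by ring
      _ = ∑ i ∈ range (q + 1), ((i + 1) * stirlingSecond q (i + 1) + stirlingSecond q i) *
            m.descFactorial (i + 1) := by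
          simp only [mul_descFactorial, mul_add, add_mul, sum_add_distrib, shift, add_comm]
      _ = ∑ i ∈ range (q + 2), stirlingSecond (q + 1) i * m.descFactorial i := by
          simp [sum_range_succ' _ (q + 1), stirlingSecond_succ_succ]

theorem add_one_pow_eq_sum_stirlingSecond_mul_descFactorial (m p : ℕ) :
    (m + 1) ^ p = ∑ j ∈ range (p + 1), stirlingSecond (p + 1) (j + 1) * m.descFactorial j := by
  refine Nat.eq_of_mul_eq_mul_left (succ_pos m) ?_
  rw [← pow_succ', pow_eq_sum_stirlingSecond_mul_descFactorial, sum_range_succ', mul_sum]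
  simp only [succ_descFactorial_succ, stirlingSecond_succ_zero, zero_mul, add_zero, succ_eq_add_one]
  exact sum_congr rfl fun j _ => by ring

theorem sum_range_choose_left (n k : ℕ) :
    ∑ m ∈ range (n + 1), m.choose k = (n + 1).choose (k + 1) := by
  rw [← sum_Icc_choose]
  refine (sum_subset (fun m hm => ?_) fun m hm hm' => choose_eq_zero_of_lt ?_).symm
  · simp only [mem_Icc, mem_range] at hm ⊢; omega
  · simp only [mem_Icc, mem_range] at hm hm'; omega

theorem sum_range_add_one_pow_eq_sum_stirlingSecond (n p : ℕ) :
    ∑ m ∈ range (n + 1), (m + 1) ^ p =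
      ∑ j ∈ range (n + 1), stirlingSecond (p + 1) (j + 1) * j ! * (n + 1).choose (j + 1) := by
  simp_rw [add_one_pow_eq_sum_stirlingSecond_mul_descFactorial,
    descFactorial_eq_factorial_mul_choose]
  rw [sum_comm]
  simp_rw [← mul_sum, sum_range_choose_left, ← mul_assoc]
  refine sum_range_eq_sum_range_of_eq_zero (fun j hj => ?_) fun j hj => ?_
  · rw [stirlingSecond_eq_zero_of_lt (by omega), zero_mul, zero_mul]
  · rw [choose_eq_zero_of_lt (by omega), mul_zero]

/-- The unsigned Lah number `L(n, k)`, counting partitions of an `n`-set into `k` nonempty linearly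
ordered blocks. -/
def lah (n k : ℕ) : ℕ := ∑ i ∈ range (n + 1), stirlingFirst n i * stirlingSecond i k

theorem lah_succ_zero (n : ℕ) : lah (n + 1) 0 = 0 := by
  simp [lah, sum_range_succ']

theorem lah_succ_succ (n k : ℕ) : lah (n + 1) (k + 1) = (n + k + 1) * lah n (k + 1) + lah n k := by
  have drop_top : ∀ f : ℕ → ℕ, ∑ i ∈ range (n + 2), stirlingFirst n i * f i =
      ∑ i ∈ range (n + 1), stirlingFirst n i * f i := fun f => by
    simp [sum_range_succ _ (n + 1), stirlingFirst_eq_zero_of_lt (lt_add_one n)]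
  calc lah (n + 1) (k + 1)
      = ∑ i ∈ range (n + 1), (n * stirlingFirst n (i + 1) + stirlingFirst n i) *
          stirlingSecond (i + 1) (k + 1) := by
        simp [lah, sum_range_succ' _ (n + 1), stirlingFirst_succ_succ]
    _ = n * ∑ i ∈ range (n + 2), stirlingFirst n i * stirlingSecond i (k + 1) +
          ∑ i ∈ range (n + 1), stirlingFirst n i *
            ((k + 1) * stirlingSecond i (k + 1) + stirlingSecond i k) := by
        simp [sum_range_succ' _ (n + 1), add_mul, sum_add_distrib, mul_sum, mul_assoc,
          stirlingSecond_succ_succ]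
    _ = _ := by
        simp only [lah, drop_top, mul_add, sum_add_distrib, mul_left_comm _ (k + 1), ← mul_sum]
        ring

theorem factorial_mul_lah (n k : ℕ) : k ! * lah (n + 1) (k + 1) = n ! * (n + 1).choose (k + 1) := by
  induction n generalizing k with
  | zero =>
    cases k <;> simp [lah, sum_range_succ, stirlingFirst_self, stirlingSecond_self,
      stirlingSecond_eq_zero_of_lt, choose_eq_zero_of_lt]
  | succ n ih =>
    rw [lah_succ_succ]
    cases k with
    | zero =>
      have h := ih 0
      simp only [factorial_zero, one_mul, zero_add, choose_one_right, lah_succ_zero, add_zero] at h ⊢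
      rw [h, factorial_succ]
      ring
    | succ k =>
      have pascal := choose_succ_succ (n + 1) (k + 1)
      have absorb := add_one_mul_choose_eq (n + 1) (k + 1)
      have ih₁ := ih (k + 1)
      have ih₀ := ih k
      rw [factorial_succ] at ih₁ ⊢
      rw [factorial_succ n]
      zify at *
      linear_combination (↑n + ↑k + 3) * ih₁ + (↑k + 1) * ih₀ -
        (n ! : ℤ) * ((↑n + ↑k + 3) * pascal + absorb)

theorem sum_Icc_stirlingFirst_mul_stirlingSecond (n j : ℕ) :
    ∑ k ∈ Icc j n, stirlingFirst (n + 1) (k + 1) * stirlingSecond (k + 1) (j + 1) =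
      lah (n + 1) (j + 1) := by
  rw [lah, sum_range_succ', stirlingFirst_succ_zero, zero_mul, add_zero]
  refine sum_subset (fun k hk => ?_) fun k hk hk' => ?_
  · simp only [mem_Icc, mem_range] at hk ⊢; omega
  · simp only [mem_Icc, mem_range] at hk hk'
    rw [stirlingSecond_eq_zero_of_lt (by omega), mul_zero]

end Nat

theorem sum_powers_eq_double_stirling_sum (n p : ℕ) :
    (∑ k ∈ Finset.Icc 1 (n + 1), (k : ℚ) ^ p) =
      (1 / (Nat.factorial n : ℚ)) *
        ∑ j ∈ Finset.range (n + 1),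
          (Nat.factorial j : ℚ) ^ 2 * (stirlingSecond (p + 1) (j + 1) : ℚ) *
            (∑ k ∈ Finset.Icc j n, (stirlingFirst (n + 1) (k + 1) : ℚ) *
              (stirlingSecond (k + 1) (j + 1) : ℚ)) := by
  rw [stirlingFirst_eq_nat_stirlingFirst, stirlingSecond_eq_nat_stirlingSecond]
  have power_sum : ∑ k ∈ Icc 1 (n + 1), (k : ℚ) ^ p = ∑ j ∈ range (n + 1),
      (Nat.stirlingSecond (p + 1) (j + 1) : ℚ) * j ! * (n + 1).choose (j + 1) := by
    rw [← Ico_add_one_right_eq_Icc, sum_Ico_eq_sum_range]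
    simp only [add_tsub_cancel_right, add_comm 1]
    exact_mod_cast Nat.sum_range_add_one_pow_eq_sum_stirlingSecond n p
  rw [power_sum, mul_sum]
  refine sum_congr rfl fun j _ => ?_
  have inner_sum : ∑ k ∈ Icc j n, (Nat.stirlingFirst (n + 1) (k + 1) : ℚ) *
      Nat.stirlingSecond (k + 1) (j + 1) = Nat.lah (n + 1) (j + 1) := by
    exact_mod_cast Nat.sum_Icc_stirlingFirst_mul_stirlingSecond n j
  have closed_form : (j ! : ℚ) * Nat.lah (n + 1) (j + 1) = n ! * (n + 1).choose (j + 1) := by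
    exact_mod_cast Nat.factorial_mul_lah n j
  rw [inner_sum, one_div, eq_inv_mul_iff_mul_eq₀ (by positivity)]
  linear_combination (-(Nat.stirlingSecond (p + 1) (j + 1) * j ! : ℚ)) * closed_form
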